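/- Let f_1,…,f_k : X × Y → {0,1} be problems on finite nonempty sets X and Y, let α, β ∈ (0,1], and suppose every f_i is (α|X|, β|Y|)-rich. If the direct-sum problem ⊕^k f̄ has (s,w,t)-certificates with 1 ≤ k·t ≤ s, then there exists an index i with 1 ≤ i ≤ k such that f_i contains a monochromatic 1-rectangle of size (α^3·|X| / binom(s,kt)^{3/k}) × (β^3·|Y| / (binom(s,kt)^{3/k}·2^{3·w·t})), where binom(s,kt) is the binomial coefficient s choose kt. -/

import Mathlib

/-- `f` has `(s,w,t)`-certificates: there is a code `T : Y → Σ^s` with alphabet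
`Σ = {0,1}^w` such that for every query `x` and database `y` some set `P` of at
most `t` cells determines the answer `f (x, y)`. -/
def HasCertificates {X Y Z : Type*} (f : X × Y → Z) (s w t : ℕ) : Prop :=
  ∃ T : Y → Fin s → (Fin w → Bool),
    ∀ x : X, ∀ y : Y, ∃ P : Finset (Fin s), P.card ≤ t ∧
      ∀ y' : Y, (∀ i ∈ P, T y' i = T y i) → f (x, y') = f (x, y)

/-- `f` is `(u,v)`-rich: at least `v` databases have at least `u` positive queries. -/
def IsRich {X Y : Type*} [Fintype X] (f : X × Y → Fin 2) (u v : ℝ) : Prop :=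
  ∃ B : Finset Y, v ≤ (B.card : ℝ) ∧
    ∀ y ∈ B, u ≤ ((Finset.univ.filter fun x : X => f (x, y) = 1).card : ℝ)

/-- `f` contains a monochromatic 1-rectangle of size `a × b`. -/
def HasOneRectangle {X Y : Type*} (f : X × Y → Fin 2) (a b : ℝ) : Prop :=
  ∃ (A : Finset X) (B : Finset Y), a ≤ (A.card : ℝ) ∧ b ≤ (B.card : ℝ) ∧
    ∀ x ∈ A, ∀ y ∈ B, f (x, y) = 1

/-- The direct-sum problem `⊕^k f̄ : ([k] × X) × Y^k → {0,1}`,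
`⊕^k f̄ ((i,x), ȳ) = f_i (x, ȳ i)`. -/
def directSum {X Y : Type*} {k : ℕ} (f : Fin k → X × Y → Fin 2) :
    (Fin k × X) × (Fin k → Y) → Fin 2 :=
  fun p => f p.1.1 (p.1.2, p.2 p.1.1)

/-- The direct-product problem `∧^k f̄ : X^k × Y^k → {0,1}`,
`∧^k f̄ (x̄, ȳ) = ∏ i, f_i (x̄ i, ȳ i)`. -/
def directProd {X Y : Type*} {k : ℕ} (f : Fin k → X × Y → Fin 2) :
    (Fin k → X) × (Fin k → Y) → Fin 2 :=
  fun p => ∏ i : Fin k, f i (p.1 i, p.2 i)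

/-!
Taking the union of the certificates of the `k` coordinates, the direct product `∧^k f̄` has
`(s, w, kt)`-certificates, and it is `((α|X|)^k, (β|Y|)^k)`-rich on the product of the rich
database sets. The richness lemma (pigeonhole first on the `C(s,kt)` possible positions of a
certificate, then on the `2^{wkt}` possible contents of those cells) yields a 1-rectangle `A × B`
of `∧^k f̄` with `|A| ≥ (α|X|)^k / C(s,kt)` and `|B| ≥ (β|Y|)^k / (C(s,kt) 2^{wkt})`. Its
coordinate projections `A_i × B_i` are 1-rectangles of the `f_i` with `∏ |A_i| ≥ |A|` and
`∏ |B_i| ≥ |B|`. Finally, if a product of `k` numbers in `[0, 1]` is at least `c`, fewer than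
`k/3` of them lie below `c^{3/k}`, so a single coordinate `i` is large on both sides.
-/

open Finset

lemma exists_card_div_le_card_fiber {α β : Type*} [DecidableEq β] {s : Finset α} {t : Finset β}
    {f : α → β} {n : ℝ} (hf : ∀ a ∈ s, f a ∈ t) (ht : t.Nonempty) (htn : (#t : ℝ) ≤ n) :
    ∃ y ∈ t, (#s : ℝ) / n ≤ #{x ∈ s | f x = y} := by
  have hn : 0 < n := (Nat.cast_pos.mpr ht.card_pos).trans_le htn
  refine exists_le_card_fiber_of_nsmul_le_card_of_maps_to hf ht ?_
  rw [nsmul_eq_mul, mul_div_assoc', div_le_iff₀ hn, mul_comm]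
  exact mul_le_mul_of_nonneg_left htn (Nat.cast_nonneg _)

lemma HasCertificates.exists_card_eq {X Y Z : Type*} {g : X × Y → Z} {s w t : ℕ}
    (hcert : HasCertificates g s w t) (hts : t ≤ s) :
    ∃ T : Y → Fin s → (Fin w → Bool), ∀ x y, ∃ P : Finset (Fin s), #P = t ∧
      ∀ y', (∀ i ∈ P, T y' i = T y i) → g (x, y') = g (x, y) := by
  obtain ⟨T, hT⟩ := hcert
  refine ⟨T, fun x y => ?_⟩
  obtain ⟨P, hP, hPcert⟩ := hT x y
  obtain ⟨Q, hPQ, hQ⟩ := exists_superset_card_eq hP (by simpa using hts)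
  exact ⟨Q, hQ, fun y' hy' => hPcert y' fun i hi => hy' i (hPQ hi)⟩

theorem HasCertificates.hasOneRectangle_of_isRich {X Y : Type*} [Fintype X] {g : X × Y → Fin 2}
    {s w t : ℕ} {u v : ℝ} (hcert : HasCertificates g s w t) (hts : t ≤ s) (hrich : IsRich g u v)
    (hv : 0 < v) :
    HasOneRectangle g (u / s.choose t) (v / (s.choose t * 2 ^ (w * t))) := by
  classical
  obtain ⟨T, hT⟩ := hcert.exists_card_eq hts
  choose Q hQcard hQ using hT
  obtain ⟨B, hvB, hB⟩ := hrich
  have hcells : (#(univ.powersetCard t : Finset (Finset (Fin s))) : ℝ) ≤ s.choose t := by simp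
  have hcells_ne : (univ.powersetCard t : Finset (Finset (Fin s))).Nonempty :=
    powersetCard_nonempty.mpr (by simpa using hts)
  have hQmem : ∀ x y, Q x y ∈ univ.powersetCard t := fun x y => by simp [hQcard]
  have hcol : ∀ y, ∃ P ∈ univ.powersetCard t, (#{x | g (x, y) = 1} : ℝ) / s.choose t ≤
      #{x ∈ {x | g (x, y) = 1} | Q x y = P} :=
    fun y => exists_card_div_le_card_fiber (fun x _ => hQmem x y) hcells_ne hcells
  choose P hP hPcard using hcol
  obtain ⟨P₀, hP₀, hB₁⟩ := exists_card_div_le_card_fiber (fun y _ => hP y) hcells_ne hcells (s := B)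
  have hcontents : (#(univ : Finset (P₀ → Fin w → Bool)) : ℝ) ≤ 2 ^ (w * t) := by
    simp [pow_mul, (mem_powersetCard.mp hP₀).2]
  obtain ⟨c, -, hB₂⟩ := exists_card_div_le_card_fiber (s := {y ∈ B | P y = P₀})
    (f := fun y (j : P₀) => T y j) (fun _ _ => mem_univ _) univ_nonempty hcontents
  set B' := {y ∈ {y ∈ B | P y = P₀} | (fun (j : P₀) => T y j) = c}
  have hB' : v / (s.choose t * 2 ^ (w * t)) ≤ #B' := by
    calc v / (s.choose t * 2 ^ (w * t)) ≤ #B / s.choose t / 2 ^ (w * t) := by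
          rw [div_div]; gcongr
      _ ≤ #{y ∈ B | P y = P₀} / 2 ^ (w * t) :=
          div_le_div_of_nonneg_right hB₁ (by positivity)
      _ ≤ #B' := hB₂
  obtain ⟨y₀, hy₀⟩ : B'.Nonempty := by
    rw [← card_pos, ← Nat.cast_pos (α := ℝ)]
    have hC : (0 : ℝ) < s.choose t := by exact_mod_cast Nat.choose_pos hts
    exact lt_of_lt_of_le (by positivity) hB'
  simp only [B', mem_filter] at hy₀
  refine ⟨({x ∈ {x | g (x, y₀) = 1} | Q x y₀ = P₀} : Finset X), B', ?_, hB', ?_⟩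
  · calc u / s.choose t ≤ #{x | g (x, y₀) = 1} / s.choose t := by gcongr; exact hB y₀ hy₀.1.1
      _ ≤ _ := hy₀.1.2 ▸ hPcard y₀
  · intro x hx y hy
    simp only [B', mem_filter, mem_univ, true_and] at hx hy
    -- `y` agrees with `y₀` on `P₀`, which certifies the query `x` at `y₀`
    rw [hQ x y₀ y (fun j hj => congrFun (hy.2.trans hy₀.2.symm) ⟨j, hx.2 ▸ hj⟩), hx.1]

section DirectProduct

variable {X Y : Type*} {k : ℕ} {f : Fin k → X × Y → Fin 2}

open Fin.CommRing in
lemma directProd_eq_one_iff {x : Fin k → X} {y : Fin k → Y} :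
    directProd f (x, y) = 1 ↔ ∀ i, f i (x i, y i) = 1 := by
  change ∏ i, f i (x i, y i) = 1 ↔ _
  refine ⟨fun h i => ?_, fun h => prod_eq_one fun i _ => h i⟩
  by_contra hi
  have h0 : f i (x i, y i) = 0 := by omega
  exact zero_ne_one ((prod_eq_zero (mem_univ i) h0).symm.trans h)

lemma HasCertificates.directProd {s w t : ℕ} (hcert : HasCertificates (directSum f) s w t) :
    HasCertificates (_root_.directProd f) s w (k * t) := by
  classical
  obtain ⟨T, hT⟩ := hcert
  refine ⟨T, fun x y => ?_⟩
  choose P hPcard hP using fun i => hT (i, x i) y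
  refine ⟨univ.biUnion P, ?_, fun y' hy' => prod_congr rfl fun i _ => ?_⟩
  · calc #(univ.biUnion P) ≤ ∑ i, #(P i) := card_biUnion_le
      _ ≤ ∑ _i : Fin k, t := sum_le_sum fun i _ => hPcard i
      _ = k * t := by simp
  · exact hP i y' fun j hj => hy' j (mem_biUnion.mpr ⟨i, mem_univ i, hj⟩)

lemma IsRich.directProd [Fintype X] {u v : ℝ} (hrich : ∀ i, IsRich (f i) u v) (hu : 0 ≤ u)
    (hv : 0 ≤ v) : IsRich (_root_.directProd f) (u ^ k) (v ^ k) := by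
  classical
  choose B hvB hB using hrich
  refine ⟨Fintype.piFinset B, ?_, fun y hy => ?_⟩
  · rw [Fintype.card_piFinset, Nat.cast_prod, ← Fin.prod_const]
    exact prod_le_prod (fun _ _ => hv) fun i _ => hvB i
  · have hsub : Fintype.piFinset (fun i => ({x | f i (x, y i) = 1} : Finset X)) ⊆
        ({x | _root_.directProd f (x, y) = 1} : Finset _) := fun x hx => by
      simpa [directProd_eq_one_iff] using hx
    calc u ^ k = ∏ _i : Fin k, u := (Fin.prod_const k u).symm
      _ ≤ ∏ i, (#{x | f i (x, y i) = 1} : ℝ) :=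
          prod_le_prod (fun _ _ => hu) fun i _ => hB i (y i) (Fintype.mem_piFinset.mp hy i)
      _ ≤ _ := by
          rw [← Nat.cast_prod, ← Fintype.card_piFinset]
          exact_mod_cast card_le_card hsub

lemma HasOneRectangle.exists_of_directProd {a b : ℝ} (hrect : HasOneRectangle (directProd f) a b) :
    ∃ (A : Fin k → Finset X) (B : Fin k → Finset Y), a ≤ ∏ i, (#(A i) : ℝ) ∧
      b ≤ ∏ i, (#(B i) : ℝ) ∧ ∀ i, ∀ x ∈ A i, ∀ y ∈ B i, f i (x, y) = 1 := by
  classical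
  obtain ⟨A, B, ha, hb, hAB⟩ := hrect
  refine ⟨fun i => A.image (· i), fun i => B.image (· i), ?_, ?_, ?_⟩
  · refine ha.trans ?_
    rw [← Nat.cast_prod, ← Fintype.card_piFinset, Nat.cast_le]
    exact card_le_card fun x hx => Fintype.mem_piFinset.mpr fun i => mem_image_of_mem _ hx
  · refine hb.trans ?_
    rw [← Nat.cast_prod, ← Fintype.card_piFinset, Nat.cast_le]
    exact card_le_card fun y hy => Fintype.mem_piFinset.mpr fun i => mem_image_of_mem _ hy
  · intro i _ hxi _ hyi
    obtain ⟨x, hx, rfl⟩ := mem_image.mp hxi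
    obtain ⟨y, hy, rfl⟩ := mem_image.mp hyi
    exact directProd_eq_one_iff.mp (hAB x hx y hy) i

end DirectProduct

lemma card_filter_lt_rpow_mul_lt_one {ι : Type*} [Fintype ι] {p : ι → ℝ} {c : ℝ}
    (hp0 : ∀ i, 0 ≤ p i) (hp1 : ∀ i, p i ≤ 1) (hc : 0 < c) (hcp : c ≤ ∏ i, p i) (r : ℝ) :
    (#{i | p i < c ^ r} : ℝ) * r < 1 := by
  classical
  by_contra! hr
  set S : Finset ι := {i | p i < c ^ r}
  obtain hS | hS := S.eq_empty_or_nonempty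
  · simp only [hS, card_empty, Nat.cast_zero, zero_mul] at hr
    linarith
  have hpos : ∀ i, 0 < p i := fun i =>
    (hp0 i).lt_of_ne' (prod_ne_zero_iff.mp (hc.trans_le hcp).ne' i (mem_univ i))
  have hc1 : c ≤ 1 := hcp.trans (prod_le_one (fun i _ => hp0 i) fun i _ => hp1 i)
  have : c < c := calc
    c ≤ ∏ i, p i := hcp
    _ ≤ ∏ i ∈ S, p i := prod_le_prod_of_subset_of_le_one (subset_univ S) (fun i _ => hp0 i)
        fun i _ _ => hp1 i
    _ < ∏ _i ∈ S, c ^ r :=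
        prod_lt_prod_of_nonempty (fun i _ => hpos i) (fun i hi => (mem_filter.mp hi).2) hS
    _ = c ^ ((#S : ℝ) * r) := by
        rw [prod_const, ← Real.rpow_natCast, ← Real.rpow_mul hc.le, mul_comm]
    _ ≤ c ^ (1 : ℝ) := Real.rpow_le_rpow_of_exponent_ge hc hc1 hr
    _ = c := Real.rpow_one c
  exact lt_irrefl c this

lemma exists_rpow_le_and_rpow_le {ι : Type*} [Fintype ι] {p q : ι → ℝ} {c d r : ℝ}
    (hp0 : ∀ i, 0 ≤ p i) (hp1 : ∀ i, p i ≤ 1) (hq0 : ∀ i, 0 ≤ q i) (hq1 : ∀ i, q i ≤ 1)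
    (hc : 0 < c) (hcp : c ≤ ∏ i, p i) (hd : 0 < d) (hdq : d ≤ ∏ i, q i)
    (hr : 2 ≤ r * Fintype.card ι) : ∃ i, c ^ r ≤ p i ∧ d ^ r ≤ q i := by
  classical
  set Sp : Finset ι := {i | p i < c ^ r}
  set Sq : Finset ι := {i | q i < d ^ r}
  have hSp : (#Sp : ℝ) * r < 1 := card_filter_lt_rpow_mul_lt_one hp0 hp1 hc hcp r
  have hSq : (#Sq : ℝ) * r < 1 := card_filter_lt_rpow_mul_lt_one hq0 hq1 hd hdq r
  have hr0 : 0 < r := by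
    by_contra! hr0
    nlinarith [(Fintype.card ι).cast_nonneg (α := ℝ)]
  have hcard : #(Sp ∪ Sq) < #(univ : Finset ι) := by
    have hsum : (#Sp + #Sq : ℝ) < Fintype.card ι := by nlinarith
    rw [card_univ]
    exact (card_union_le _ _).trans_lt (by exact_mod_cast hsum)
  obtain ⟨i, -, hi⟩ := exists_mem_notMem_of_card_lt_card hcard
  simp only [Sp, Sq, mem_union, mem_filter, mem_univ, true_and, not_or, not_lt] at hi
  exact ⟨i, hi⟩

lemma exists_le_card_of_le_prod_card {X Y : Type*} [Fintype X] [Fintype Y] [Nonempty X]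
    [Nonempty Y] {k : ℕ} (A : Fin k → Finset X) (B : Fin k → Finset Y) {a b r : ℝ} (ha : 0 < a)
    (hb : 0 < b) (hr : 2 ≤ r * k) (hA : a * Fintype.card X ^ k ≤ ∏ i, (#(A i) : ℝ))
    (hB : b * Fintype.card Y ^ k ≤ ∏ i, (#(B i) : ℝ)) :
    ∃ i, a ^ r * Fintype.card X ≤ #(A i) ∧ b ^ r * Fintype.card Y ≤ #(B i) := by
  have hX : (0 : ℝ) < Fintype.card X := by exact_mod_cast Fintype.card_pos
  have hY : (0 : ℝ) < Fintype.card Y := by exact_mod_cast Fintype.card_pos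
  obtain ⟨i, hAi, hBi⟩ := exists_rpow_le_and_rpow_le
    (p := fun i => #(A i) / Fintype.card X) (q := fun i => #(B i) / Fintype.card Y)
    (fun i => by positivity) (fun i => div_le_one_of_le₀ (by exact_mod_cast card_le_univ _) hX.le)
    (fun i => by positivity) (fun i => div_le_one_of_le₀ (by exact_mod_cast card_le_univ _) hY.le)
    ha (by rwa [prod_div_distrib, Fin.prod_const, le_div_iff₀ (by positivity)])
    hb (by rwa [prod_div_distrib, Fin.prod_const, le_div_iff₀ (by positivity)])
    (by rwa [Fintype.card_fin])
  exact ⟨i, (le_div_iff₀ hX).mp hAi, (le_div_iff₀ hY).mp hBi⟩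

lemma pow_div_rpow_div {x y : ℝ} (hx : 0 ≤ x) (hy : 0 ≤ y) {k : ℕ} (hk : k ≠ 0) (m : ℕ) :
    (x ^ k / y) ^ ((m : ℝ) / k) = x ^ m / y ^ ((m : ℝ) / k) := by
  rw [Real.div_rpow (by positivity) hy, ← Real.rpow_natCast x k, ← Real.rpow_mul hx,
    mul_div_cancel₀ _ (Nat.cast_ne_zero.mpr hk), Real.rpow_natCast]

theorem directSum_richness_general {X Y : Type*} [Fintype X] [Fintype Y] [Nonempty X] [Nonempty Y]
    (k : ℕ) (f : Fin k → X × Y → Fin 2) (α β : ℝ)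
    (hα0 : 0 < α) (hβ0 : 0 < β)
    (hrich : ∀ i : Fin k, IsRich (f i) (α * Fintype.card X) (β * Fintype.card Y))
    (s w t : ℕ) (hkt : 1 ≤ k * t) (hkts : k * t ≤ s)
    (hcert : HasCertificates (directSum f) s w t) :
    ∃ i : Fin k, HasOneRectangle (f i)
      (α ^ 3 * Fintype.card X / ((s.choose (k * t) : ℝ)) ^ ((3 : ℝ) / k))
      (β ^ 3 * Fintype.card Y /
        (((s.choose (k * t) : ℝ)) ^ ((3 : ℝ) / k) * 2 ^ (3 * w * t))) := by
  have hk : k ≠ 0 := by rintro rfl; simp at hkt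
  have hC : (0 : ℝ) < s.choose (k * t) := by exact_mod_cast Nat.choose_pos hkts
  set C : ℝ := (s.choose (k * t) : ℝ)
  obtain ⟨A, B, hA, hB, hAB⟩ := (hcert.directProd.hasOneRectangle_of_isRich hkts
    (IsRich.directProd hrich (by positivity) (by positivity)) (by positivity)).exists_of_directProd
  obtain ⟨i, hAi, hBi⟩ := exists_le_card_of_le_prod_card A B
    (a := α ^ k / C) (b := (β / 2 ^ (w * t)) ^ k / C) (r := 3 / k) (by positivity)
    (by positivity) (by field_simp; norm_num) (hA.trans_eq' (by ring)) (hB.trans_eq' (by ring))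
  refine ⟨i, A i, B i, ?_, ?_, hAB i⟩
  · convert hAi using 1
    rw [show (3 : ℝ) / k = (3 : ℕ) / k by norm_num, pow_div_rpow_div hα0.le hC.le hk]
    ring
  · convert hBi using 1
    rw [show (3 : ℝ) / k = (3 : ℕ) / k by norm_num, pow_div_rpow_div (by positivity) hC.le hk]
    ring

/-- Direct-sum richness lemma for certificates: if every `f i` is `(α|X|, β|Y|)`-rich
with `α, β ∈ (0,1]` and the direct-sum problem `⊕^k f̄` has `(s,w,t)`-certificates with
`1 ≤ k·t ≤ s`, then some `f i` contains a monochromatic 1-rectangle of size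
`(α³|X| / C(s,kt)^{3/k}) × (β³|Y| / (C(s,kt)^{3/k}·2^{3wt}))`. -/
theorem directSum_richness {X Y : Type*} [Fintype X] [Fintype Y] [Nonempty X] [Nonempty Y]
    (k : ℕ) (f : Fin k → X × Y → Fin 2) (α β : ℝ)
    (hα0 : 0 < α) (hα1 : α ≤ 1) (hβ0 : 0 < β) (hβ1 : β ≤ 1)
    (hrich : ∀ i : Fin k, IsRich (f i) (α * Fintype.card X) (β * Fintype.card Y))
    (s w t : ℕ) (hkt : 1 ≤ k * t) (hkts : k * t ≤ s)
    (hcert : HasCertificates (directSum f) s w t) :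
    ∃ i : Fin k, HasOneRectangle (f i)
      (α ^ 3 * Fintype.card X / ((s.choose (k * t) : ℝ)) ^ ((3 : ℝ) / k))
      (β ^ 3 * Fintype.card Y /
        (((s.choose (k * t) : ℝ)) ^ ((3 : ℝ) / k) * 2 ^ (3 * w * t))) :=
  directSum_richness_general k f α β hα0 hβ0 hrich s w t hkt hkts hcert
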